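/- arXiv:2509.24861 — 4 statements merged into one kernel-verified Lean document; each statement's English description precedes it below -/
import Mathlib

section
/- Let N be a finite set with at least two elements and B : N × N → ℕ a symmetric function with B(i,i) = 0. Then B satisfies the ultrametric condition (for all pairwise distinct i, j, k, if B(i,j) ≤ B(i,k) ≤ B(j,k) then B(i,k) = B(j,k)) if and only if there exists a family of pairwise distinct polynomials (q_i)_{i ∈ N} in ℂ[z] such that for all distinct i, j, deg(q_i - q_j) = B(i,j) + 1. -/
/-- Characterisation of fission graphs: a symmetric `ℕ`-valued function `B` (zero on the
diagonal) on a finite set with at least two elements satisfies the ultrametric condition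
iff it is realised as `B i j + 1 = deg (q i - q j)` for a family of pairwise distinct
complex polynomials. -/
theorem stmt_3 (N : Type*) [Fintype N] (hcard : 2 ≤ Fintype.card N)
    (B : N → N → ℕ) (hsymm : ∀ i j, B i j = B j i) (hdiag : ∀ i, B i i = 0) :
    (∀ i j k : N, i ≠ j → i ≠ k → j ≠ k →
        B i j ≤ B i k → B i k ≤ B j k → B i k = B j k) ↔
    (∃ q : N → Polynomial ℂ, Function.Injective q ∧
        ∀ i j : N, i ≠ j → (q i - q j).natDegree = B i j + 1) := by
  classical
  constructor
  · intro hU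
    -- the ultrametric inequality
    have hmax : ∀ i j k : N, B i k ≤ max (B i j) (B j k) := by
      intro i j k
      by_cases hij : i = j
      · subst hij; simp
      by_cases hjk : j = k
      · subst hjk; simp
      by_cases hik : i = k
      · subst hik; simp [hdiag]
      by_contra hlt
      push_neg at hlt
      obtain ⟨h1, h2⟩ := max_lt_iff.mp hlt
      rcases le_total (B i j) (B j k) with hle | hle
      · have := hU j i k (Ne.symm hij) hjk hik
          (by rw [hsymm j i]; exact hle) (le_of_lt h2)
        omega
      · have := hU j k i hjk (Ne.symm hij) (Ne.symm hik)
          (by rw [hsymm j i]; exact hle)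
          (by rw [hsymm j i, hsymm k i]; exact le_of_lt h1)
        rw [hsymm j i, hsymm k i] at this
        omega
    -- the ball relation at level n
    set R : ℕ → N → N → Prop := fun n i j => i = j ∨ B i j + 1 < n with hR
    have hRrefl : ∀ n i, R n i i := fun n i => Or.inl rfl
    have hRsymm : ∀ n i j, R n i j → R n j i := by
      intro n i j h
      rcases h with h | h
      · exact Or.inl h.symm
      · exact Or.inr (by rw [hsymm j i]; exact h)
    have hRtrans : ∀ n i j k, R n i j → R n j k → R n i k := by
      intro n i j k h1 h2
      rcases h1 with h1 | h1
      · subst h1; exact h2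
      rcases h2 with h2 | h2
      · subst h2; exact Or.inr h1
      have := hmax i j k
      exact Or.inr (by omega)
    -- encoding of balls
    let e : N ≃ Fin (Fintype.card N) := Fintype.equivFin N
    let S : ℕ → N → Finset N := fun n i => Finset.univ.filter (fun j => R n i j)
    have hSmem : ∀ n i j, j ∈ S n i ↔ R n i j := by
      intro n i j; simp [S]
    have hSself : ∀ n i, i ∈ S n i := fun n i => (hSmem n i i).mpr (hRrefl n i)
    let f : ℕ → N → ℕ := fun n i =>
      ((S n i).image (fun j => (e j : ℕ))).min'
        ⟨(e i : ℕ), Finset.mem_image_of_mem _ (hSself n i)⟩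
    have hSeq : ∀ n i j, R n i j → S n i = S n j := by
      intro n i j h
      ext k
      simp only [hSmem]
      exact ⟨fun hk => hRtrans n j i k (hRsymm n i j h) hk, fun hk => hRtrans n i j k h hk⟩
    have hfeq : ∀ n i j, R n i j → f n i = f n j := by
      intro n i j h; simp only [f, hSeq n i j h]
    have hfsep : ∀ n i j, f n i = f n j → R n i j := by
      intro n i j h
      have h1 : f n i ∈ (S n i).image (fun j => (e j : ℕ)) := Finset.min'_mem _ _
      have h2 : f n j ∈ (S n j).image (fun j => (e j : ℕ)) := Finset.min'_mem _ _
      rw [h] at h1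
      obtain ⟨a, ha, hae⟩ := Finset.mem_image.mp h1
      obtain ⟨b, hb, hbe⟩ := Finset.mem_image.mp h2
      have hab : a = b := by
        refine e.injective (Fin.ext ?_)
        omega
      subst hab
      exact hRtrans n i a j ((hSmem n i a).mp ha) (hRsymm n j a ((hSmem n j a).mp hb))
    -- degree bound
    set M : ℕ := (Finset.univ.sup (fun p : N × N => B p.1 p.2)) + 2 with hM
    have hBM : ∀ i j, B i j + 1 < M := by
      intro i j
      have : B i j ≤ Finset.univ.sup (fun p : N × N => B p.1 p.2) :=
        Finset.le_sup (f := fun p : N × N => B p.1 p.2) (Finset.mem_univ (i, j))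
      omega
    -- the polynomials
    set q : N → Polynomial ℂ := fun i =>
      ∑ n ∈ Finset.range M, Polynomial.monomial n ((f n i : ℂ)) with hq
    have hcoeff : ∀ i k, (q i).coeff k = if k < M then (f k i : ℂ) else 0 := by
      intro i k
      rw [hq]
      simp only [Polynomial.finset_sum_coeff, Polynomial.coeff_monomial]
      rw [Finset.sum_ite_eq' (Finset.range M) k (fun n => ((f n i : ℂ)))]
      simp
    have hdeg : ∀ i j : N, i ≠ j → (q i - q j).natDegree = B i j + 1 := by
      intro i j hij
      have hckey : (q i - q j).coeff (B i j + 1) ≠ 0 := by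
        rw [Polynomial.coeff_sub, hcoeff, hcoeff, if_pos (hBM i j), if_pos (hBM i j)]
        intro hc
        have : (f (B i j + 1) i : ℂ) = (f (B i j + 1) j : ℂ) := by linear_combination hc
        have hfij : f (B i j + 1) i = f (B i j + 1) j := Nat.cast_injective this
        rcases hfsep _ _ _ hfij with h | h
        · exact hij h
        · omega
      apply le_antisymm
      · rw [Polynomial.natDegree_le_iff_coeff_eq_zero]
        intro m hm
        rw [Polynomial.coeff_sub, hcoeff, hcoeff]
        by_cases hmM : m < M
        · rw [if_pos hmM, if_pos hmM]
          rw [hfeq m i j (Or.inr hm)]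
          ring
        · rw [if_neg hmM, if_neg hmM]; ring
      · exact Polynomial.le_natDegree_of_ne_zero hckey
    refine ⟨q, ?_, hdeg⟩
    intro i j hqij
    by_contra hij
    have := hdeg i j hij
    rw [hqij, sub_self, Polynomial.natDegree_zero] at this
    omega
  · rintro ⟨q, hinj, hdeg⟩ i j k hij hik hjk h1 h2
    by_contra hne
    have hlt : B i k < B j k := lt_of_le_of_ne h2 hne
    have hkey : (q j - q k) = (q j - q i) + (q i - q k) := by ring
    have hle : (q j - q k).natDegree ≤ max (q j - q i).natDegree (q i - q k).natDegree := by
      rw [hkey]; exact Polynomial.natDegree_add_le _ _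
    rw [hdeg j k hjk, hdeg j i (Ne.symm hij), hdeg i k hik, hsymm j i] at hle
    omega
end

section
/- Let p_ab, p_bc, p_cd, p_da, p_ac, p_bd be pairwise distinct prime numbers, assigned as edge multiplicities to the six edges of the complete graph on four vertices {a, b, c, d}. Then there is no function r : {a,b,c,d} → ℤ_{≥1} such that the rescaled multiplicities B̃(x,y) = p_xy/(r(x) r(y)) satisfy the ultrametric condition for every triple of distinct vertices. -/
theorem key9 {p q x y : ℕ} (h : p * x = q * y) (hp : p.Prime) (hq : q.Prime)
    (hx : x ≠ 0) (hy : y ≠ 0) (ℓ : ℕ) :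
    p.factorization ℓ + x.factorization ℓ = q.factorization ℓ + y.factorization ℓ := by
  have h2 : (p * x).factorization = (q * y).factorization := by rw [h]
  rw [Nat.factorization_mul hp.pos.ne' hx, Nat.factorization_mul hq.pos.ne' hy] at h2
  simpa using DFunLike.congr_fun h2 ℓ

theorem fx9 (p q : ℕ) (hp : p.Prime) (hq : q.Prime) (hne : p ≠ q) : p.factorization q = 0 :=
  Nat.factorization_eq_zero_of_not_dvd fun hd => hne ((Nat.prime_dvd_prime_iff_eq hq hp).mp hd).symm

/-- The complete graph on four vertices whose six edge multiplicities are pairwise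
distinct primes admits no decoration `r : V → ℤ_{≥1}` making the rescaled
multiplicities ultrametric. -/
theorem stmt_9 (pab pbc pcd pda pac pbd : ℕ)
    (h1 : Nat.Prime pab) (h2 : Nat.Prime pbc) (h3 : Nat.Prime pcd)
    (h4 : Nat.Prime pda) (h5 : Nat.Prime pac) (h6 : Nat.Prime pbd)
    (hdist : [pab, pbc, pcd, pda, pac, pbd].Pairwise (· ≠ ·))
    (B : Fin 4 → Fin 4 → ℕ)
    (hsymm : ∀ x y, B x y = B y x)
    (hab : B 0 1 = pab) (hbc : B 1 2 = pbc) (hcd : B 2 3 = pcd)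
    (hda : B 3 0 = pda) (hac : B 0 2 = pac) (hbd : B 1 3 = pbd) :
    ¬ ∃ r : Fin 4 → ℤ, (∀ x, 1 ≤ r x) ∧
      (∀ x y z : Fin 4, x ≠ y → x ≠ z → y ≠ z →
        (B x y : ℚ) / ((r x : ℚ) * (r y : ℚ)) ≤ (B x z : ℚ) / ((r x : ℚ) * (r z : ℚ)) →
        (B x z : ℚ) / ((r x : ℚ) * (r z : ℚ)) ≤ (B y z : ℚ) / ((r y : ℚ) * (r z : ℚ)) →
        (B x z : ℚ) / ((r x : ℚ) * (r z : ℚ)) = (B y z : ℚ) / ((r y : ℚ) * (r z : ℚ))) := by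
  simp only [List.pairwise_cons, List.mem_cons, List.not_mem_nil,
    forall_eq_or_imp, forall_eq, or_false, and_true] at hdist
  obtain ⟨⟨d12, d13, d14, d15, d16⟩, ⟨d23, d24, d25, d26⟩, ⟨d34, d35, d36⟩, ⟨d45, d46⟩, d56, -⟩ :=
    hdist
  rintro ⟨r, hr, H⟩
  obtain ⟨n, hzn⟩ : ∃ n : Fin 4 → ℕ, ∀ i, (n i : ℤ) = r i :=
    ⟨fun i => (r i).toNat, fun i => Int.toNat_of_nonneg (by linarith [hr i])⟩
  have hn0 : ∀ i, n i ≠ 0 := fun i => by have h := hr i; have := hzn i; omega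
  have hn : ∀ i, ((n i : ℚ)) = ((r i : ℚ)) := fun i => by rw [← hzn i]; push_cast; ring
  have hnQ : ∀ i, ((n i : ℚ)) ≠ 0 := fun i => Nat.cast_ne_zero.mpr (hn0 i)
  have had : B 0 3 = pda := by rw [hsymm]; exact hda
  have fsymm : ∀ a b : Fin 4,
      (B a b : ℚ) / ((r a : ℚ) * (r b : ℚ)) = (B b a : ℚ) / ((r b : ℚ) * (r a : ℚ)) := by
    intro a b; rw [hsymm, mul_comm ((r a : ℚ))]
  have tri : ∀ x y z : Fin 4, x ≠ y → x ≠ z → y ≠ z →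
      ((B x y : ℚ) / ((r x : ℚ) * (r y : ℚ)) = (B x z : ℚ) / ((r x : ℚ) * (r z : ℚ)) ∨
       (B x y : ℚ) / ((r x : ℚ) * (r y : ℚ)) = (B y z : ℚ) / ((r y : ℚ) * (r z : ℚ)) ∨
       (B x z : ℚ) / ((r x : ℚ) * (r z : ℚ)) = (B y z : ℚ) / ((r y : ℚ) * (r z : ℚ))) := by
    intro x y z hxy hxz hyz
    rcases le_total ((B x y : ℚ) / ((r x : ℚ) * (r y : ℚ)))
        ((B x z : ℚ) / ((r x : ℚ) * (r z : ℚ))) with hA | hA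
    · rcases le_total ((B x z : ℚ) / ((r x : ℚ) * (r z : ℚ)))
          ((B y z : ℚ) / ((r y : ℚ) * (r z : ℚ))) with hB | hB
      · exact Or.inr (Or.inr (H x y z hxy hxz hyz hA hB))
      · rcases le_total ((B x y : ℚ) / ((r x : ℚ) * (r y : ℚ)))
            ((B y z : ℚ) / ((r y : ℚ) * (r z : ℚ))) with hC | hC
        · refine Or.inr (Or.inr ?_)
          have e := H y x z hxy.symm hyz hxz (by rw [← fsymm x y]; exact hC) hB
          exact e.symm
        · refine Or.inl ?_
          have e := H y z x hyz hxy.symm hxz.symm (by rw [← fsymm x y]; exact hC)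
            (by rw [← fsymm x y, ← fsymm x z]; exact hA)
          rw [fsymm y x, fsymm z x] at e
          exact e
    · rcases le_total ((B x y : ℚ) / ((r x : ℚ) * (r y : ℚ)))
          ((B y z : ℚ) / ((r y : ℚ) * (r z : ℚ))) with hB | hB
      · refine Or.inr (Or.inl ?_)
        have e := H x z y hxz hxy hyz.symm hA (by rw [← fsymm y z]; exact hB)
        rw [fsymm z y] at e
        exact e
      · rcases le_total ((B x z : ℚ) / ((r x : ℚ) * (r z : ℚ)))
            ((B y z : ℚ) / ((r y : ℚ) * (r z : ℚ))) with hC | hC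
        · refine Or.inr (Or.inl ?_)
          have e := H z x y hxz.symm hyz.symm hxy
            (by rw [← fsymm x z, ← fsymm y z]; exact hC) (by rw [← fsymm y z]; exact hB)
          rw [fsymm z y] at e
          exact e.symm
        · refine Or.inl ?_
          have e := H z y x hyz.symm hxz.symm hxy.symm
            (by rw [← fsymm y z, ← fsymm x z]; exact hC)
            (by rw [← fsymm x z, ← fsymm x y]; exact hA)
          rw [fsymm z x, fsymm y x] at e
          exact e.symm
  have T1 : pab * n 2 = pac * n 1 ∨ pab * n 2 = pbc * n 0 ∨ pac * n 1 = pbc * n 0 := by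
    rcases tri 0 1 2 (by decide) (by decide) (by decide) with e | e | e
    · left
      rw [hab, hac, ← hn 0, ← hn 1, ← hn 2,
        div_eq_div_iff (mul_ne_zero (hnQ 0) (hnQ 1)) (mul_ne_zero (hnQ 0) (hnQ 2))] at e
      have h' : ((pab : ℚ)) * (n 2) = (pac : ℚ) * (n 1) :=
        mul_left_cancel₀ (hnQ 0) (by linear_combination e)
      exact_mod_cast h'
    · right; left
      rw [hab, hbc, ← hn 0, ← hn 1, ← hn 2,
        div_eq_div_iff (mul_ne_zero (hnQ 0) (hnQ 1)) (mul_ne_zero (hnQ 1) (hnQ 2))] at e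
      have h' : ((pab : ℚ)) * (n 2) = (pbc : ℚ) * (n 0) :=
        mul_left_cancel₀ (hnQ 1) (by linear_combination e)
      exact_mod_cast h'
    · right; right
      rw [hac, hbc, ← hn 0, ← hn 1, ← hn 2,
        div_eq_div_iff (mul_ne_zero (hnQ 0) (hnQ 2)) (mul_ne_zero (hnQ 1) (hnQ 2))] at e
      have h' : ((pac : ℚ)) * (n 1) = (pbc : ℚ) * (n 0) :=
        mul_left_cancel₀ (hnQ 2) (by linear_combination e)
      exact_mod_cast h'
  have T2 : pab * n 3 = pda * n 1 ∨ pab * n 3 = pbd * n 0 ∨ pda * n 1 = pbd * n 0 := by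
    rcases tri 0 1 3 (by decide) (by decide) (by decide) with e | e | e
    · left
      rw [hab, had, ← hn 0, ← hn 1, ← hn 3,
        div_eq_div_iff (mul_ne_zero (hnQ 0) (hnQ 1)) (mul_ne_zero (hnQ 0) (hnQ 3))] at e
      have h' : ((pab : ℚ)) * (n 3) = (pda : ℚ) * (n 1) :=
        mul_left_cancel₀ (hnQ 0) (by linear_combination e)
      exact_mod_cast h'
    · right; left
      rw [hab, hbd, ← hn 0, ← hn 1, ← hn 3,
        div_eq_div_iff (mul_ne_zero (hnQ 0) (hnQ 1)) (mul_ne_zero (hnQ 1) (hnQ 3))] at e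
      have h' : ((pab : ℚ)) * (n 3) = (pbd : ℚ) * (n 0) :=
        mul_left_cancel₀ (hnQ 1) (by linear_combination e)
      exact_mod_cast h'
    · right; right
      rw [had, hbd, ← hn 0, ← hn 1, ← hn 3,
        div_eq_div_iff (mul_ne_zero (hnQ 0) (hnQ 3)) (mul_ne_zero (hnQ 1) (hnQ 3))] at e
      have h' : ((pda : ℚ)) * (n 1) = (pbd : ℚ) * (n 0) :=
        mul_left_cancel₀ (hnQ 3) (by linear_combination e)
      exact_mod_cast h'
  have T3 : pac * n 3 = pda * n 2 ∨ pac * n 3 = pcd * n 0 ∨ pda * n 2 = pcd * n 0 := by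
    rcases tri 0 2 3 (by decide) (by decide) (by decide) with e | e | e
    · left
      rw [hac, had, ← hn 0, ← hn 2, ← hn 3,
        div_eq_div_iff (mul_ne_zero (hnQ 0) (hnQ 2)) (mul_ne_zero (hnQ 0) (hnQ 3))] at e
      have h' : ((pac : ℚ)) * (n 3) = (pda : ℚ) * (n 2) :=
        mul_left_cancel₀ (hnQ 0) (by linear_combination e)
      exact_mod_cast h'
    · right; left
      rw [hac, hcd, ← hn 0, ← hn 2, ← hn 3,
        div_eq_div_iff (mul_ne_zero (hnQ 0) (hnQ 2)) (mul_ne_zero (hnQ 2) (hnQ 3))] at e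
      have h' : ((pac : ℚ)) * (n 3) = (pcd : ℚ) * (n 0) :=
        mul_left_cancel₀ (hnQ 2) (by linear_combination e)
      exact_mod_cast h'
    · right; right
      rw [had, hcd, ← hn 0, ← hn 2, ← hn 3,
        div_eq_div_iff (mul_ne_zero (hnQ 0) (hnQ 3)) (mul_ne_zero (hnQ 2) (hnQ 3))] at e
      have h' : ((pda : ℚ)) * (n 2) = (pcd : ℚ) * (n 0) :=
        mul_left_cancel₀ (hnQ 3) (by linear_combination e)
      exact_mod_cast h'
  have T4 : pbc * n 3 = pbd * n 2 ∨ pbc * n 3 = pcd * n 1 ∨ pbd * n 2 = pcd * n 1 := by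
    rcases tri 1 2 3 (by decide) (by decide) (by decide) with e | e | e
    · left
      rw [hbc, hbd, ← hn 1, ← hn 2, ← hn 3,
        div_eq_div_iff (mul_ne_zero (hnQ 1) (hnQ 2)) (mul_ne_zero (hnQ 1) (hnQ 3))] at e
      have h' : ((pbc : ℚ)) * (n 3) = (pbd : ℚ) * (n 2) :=
        mul_left_cancel₀ (hnQ 1) (by linear_combination e)
      exact_mod_cast h'
    · right; left
      rw [hbc, hcd, ← hn 1, ← hn 2, ← hn 3,
        div_eq_div_iff (mul_ne_zero (hnQ 1) (hnQ 2)) (mul_ne_zero (hnQ 2) (hnQ 3))] at e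
      have h' : ((pbc : ℚ)) * (n 3) = (pcd : ℚ) * (n 1) :=
        mul_left_cancel₀ (hnQ 2) (by linear_combination e)
      exact_mod_cast h'
    · right; right
      rw [hbd, hcd, ← hn 1, ← hn 2, ← hn 3,
        div_eq_div_iff (mul_ne_zero (hnQ 1) (hnQ 3)) (mul_ne_zero (hnQ 2) (hnQ 3))] at e
      have h' : ((pbd : ℚ)) * (n 2) = (pcd : ℚ) * (n 1) :=
        mul_left_cancel₀ (hnQ 3) (by linear_combination e)
      exact_mod_cast h'
  clear tri fsymm H hr hzn hn hnQ
  -- constant factorization facts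
  have f11 : pab.factorization pab = 1 := Nat.Prime.factorization_self h1
  have f22 : pbc.factorization pbc = 1 := Nat.Prime.factorization_self h2
  have f33 : pcd.factorization pcd = 1 := Nat.Prime.factorization_self h3
  have f44 : pda.factorization pda = 1 := Nat.Prime.factorization_self h4
  have f55 : pac.factorization pac = 1 := Nat.Prime.factorization_self h5
  have f66 : pbd.factorization pbd = 1 := Nat.Prime.factorization_self h6
  have f12 : pab.factorization pbc = 0 := fx9 _ _ h1 h2 d12
  have f13 : pab.factorization pcd = 0 := fx9 _ _ h1 h3 d13
  have f14 : pab.factorization pda = 0 := fx9 _ _ h1 h4 d14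
  have f15 : pab.factorization pac = 0 := fx9 _ _ h1 h5 d15
  have f16 : pab.factorization pbd = 0 := fx9 _ _ h1 h6 d16
  have f21 : pbc.factorization pab = 0 := fx9 _ _ h2 h1 d12.symm
  have f23 : pbc.factorization pcd = 0 := fx9 _ _ h2 h3 d23
  have f24 : pbc.factorization pda = 0 := fx9 _ _ h2 h4 d24
  have f25 : pbc.factorization pac = 0 := fx9 _ _ h2 h5 d25
  have f26 : pbc.factorization pbd = 0 := fx9 _ _ h2 h6 d26
  have f31 : pcd.factorization pab = 0 := fx9 _ _ h3 h1 d13.symm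
  have f32 : pcd.factorization pbc = 0 := fx9 _ _ h3 h2 d23.symm
  have f34 : pcd.factorization pda = 0 := fx9 _ _ h3 h4 d34
  have f35 : pcd.factorization pac = 0 := fx9 _ _ h3 h5 d35
  have f36 : pcd.factorization pbd = 0 := fx9 _ _ h3 h6 d36
  have f41 : pda.factorization pab = 0 := fx9 _ _ h4 h1 d14.symm
  have f42 : pda.factorization pbc = 0 := fx9 _ _ h4 h2 d24.symm
  have f43 : pda.factorization pcd = 0 := fx9 _ _ h4 h3 d34.symm
  have f45 : pda.factorization pac = 0 := fx9 _ _ h4 h5 d45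
  have f46 : pda.factorization pbd = 0 := fx9 _ _ h4 h6 d46
  have f51 : pac.factorization pab = 0 := fx9 _ _ h5 h1 d15.symm
  have f52 : pac.factorization pbc = 0 := fx9 _ _ h5 h2 d25.symm
  have f53 : pac.factorization pcd = 0 := fx9 _ _ h5 h3 d35.symm
  have f54 : pac.factorization pda = 0 := fx9 _ _ h5 h4 d45.symm
  have f56 : pac.factorization pbd = 0 := fx9 _ _ h5 h6 d56
  have f61 : pbd.factorization pab = 0 := fx9 _ _ h6 h1 d16.symm
  have f62 : pbd.factorization pbc = 0 := fx9 _ _ h6 h2 d26.symm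
  have f63 : pbd.factorization pcd = 0 := fx9 _ _ h6 h3 d36.symm
  have f64 : pbd.factorization pda = 0 := fx9 _ _ h6 h4 d46.symm
  have f65 : pbd.factorization pac = 0 := fx9 _ _ h6 h5 d56.symm
  rcases T1 with e1 | e1 | e1 <;> rcases T2 with e2 | e2 | e2 <;>
    rcases T3 with e3 | e3 | e3 <;> rcases T4 with e4 | e4 | e4 <;>
  · have g1 := fun ℓ => key9 e1 (by assumption) (by assumption) (hn0 _) (hn0 _) ℓ
    have g2 := fun ℓ => key9 e2 (by assumption) (by assumption) (hn0 _) (hn0 _) ℓ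
    have g3 := fun ℓ => key9 e3 (by assumption) (by assumption) (hn0 _) (hn0 _) ℓ
    have g4 := fun ℓ => key9 e4 (by assumption) (by assumption) (hn0 _) (hn0 _) ℓ
    have a11 := g1 pab; have a12 := g1 pbc; have a13 := g1 pcd
    have a14 := g1 pda; have a15 := g1 pac; have a16 := g1 pbd
    have a21 := g2 pab; have a22 := g2 pbc; have a23 := g2 pcd
    have a24 := g2 pda; have a25 := g2 pac; have a26 := g2 pbd
    have a31 := g3 pab; have a32 := g3 pbc; have a33 := g3 pcd
    have a34 := g3 pda; have a35 := g3 pac; have a36 := g3 pbd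
    have a41 := g4 pab; have a42 := g4 pbc; have a43 := g4 pcd
    have a44 := g4 pda; have a45 := g4 pac; have a46 := g4 pbd
    omega
end

section
/- Let N be a finite set, B : N × N → {0, 1} symmetric with B(i,i) = 0, and suppose there exists r : N → ℤ_{≥1} such that the rescaled values B̃(i,j) = B(i,j)/(r(i) r(j)) satisfy the ultrametric condition for all triples of pairwise distinct vertices. Then B itself satisfies the ultrametric condition; equivalently, no triangle of B has edge multiplicities (0, 0, 1), i.e. the relation i ∼ j iff (i = j or B(i,j) = 0) is an equivalence relation. -/
/-- Any simply-laced graph admitting an ultrametric rescaling is itself ultrametric;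
equivalently, the relation `i ∼ j ↔ i = j ∨ B i j = 0` is an equivalence relation. -/
theorem stmt_10 (N : Type*) [Fintype N] (B : N → N → ℕ)
    (hval : ∀ i j, B i j ≤ 1)
    (hsymm : ∀ i j, B i j = B j i) (hdiag : ∀ i, B i i = 0)
    (hres : ∃ r : N → ℤ, (∀ i, 1 ≤ r i) ∧
      (∀ i j k : N, i ≠ j → i ≠ k → j ≠ k →
        (B i j : ℚ) / ((r i : ℚ) * (r j : ℚ)) ≤ (B i k : ℚ) / ((r i : ℚ) * (r k : ℚ)) →
        (B i k : ℚ) / ((r i : ℚ) * (r k : ℚ)) ≤ (B j k : ℚ) / ((r j : ℚ) * (r k : ℚ)) →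
        (B i k : ℚ) / ((r i : ℚ) * (r k : ℚ)) = (B j k : ℚ) / ((r j : ℚ) * (r k : ℚ)))) :
    (∀ i j k : N, i ≠ j → i ≠ k → j ≠ k →
        B i j ≤ B i k → B i k ≤ B j k → B i k = B j k) ∧
    Equivalence (fun i j : N => i = j ∨ B i j = 0) := by
  obtain ⟨r, hr, hu⟩ := hres
  have hrpos : ∀ i, (0:ℚ) < (r i : ℚ) := by
    intro i
    have : (0:ℤ) < r i := lt_of_lt_of_le one_pos (hr i)
    exact_mod_cast this
  have main : ∀ i j k : N, i ≠ j → i ≠ k → j ≠ k →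
      B i j ≤ B i k → B i k ≤ B j k → B i k = B j k := by
    intro i j k hij hik hjk h1 h2
    by_contra hne
    have hik0 : B i k = 0 := by have := hval j k; omega
    have hjk1 : B j k = 1 := by have := hval j k; omega
    have hij0 : B i j = 0 := by omega
    have hprod : (0:ℚ) < (r j : ℚ) * (r k : ℚ) := mul_pos (hrpos j) (hrpos k)
    have heq := hu i j k hij hik hjk
      (by simp [hij0, hik0])
      (by rw [hik0]; push_cast; rw [zero_div]; positivity)
    rw [hik0, hjk1] at heq
    push_cast at heq
    rw [zero_div] at heq
    exact (div_pos one_pos hprod).ne' heq.symm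
  refine ⟨main, ⟨fun i => Or.inl rfl, ?_, ?_⟩⟩
  · intro i j h
    rcases h with rfl | h
    · exact Or.inl rfl
    · exact Or.inr (by rw [← hsymm]; exact h)
  · intro i j k hij hjk
    rcases eq_or_ne i k with rfl | hik
    · exact Or.inl rfl
    rcases eq_or_ne i j with rfl | hij'
    · exact hjk
    rcases eq_or_ne j k with rfl | hjk'
    · exact hij
    rcases hij with h | h1
    · exact absurd h hij'
    rcases hjk with h | h2
    · exact absurd h hjk'
    right
    by_contra hB
    have hik1 : B i k = 1 := by have := hval i k; omega
    have := main j i k (Ne.symm hij') hjk' hik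
      (by rw [hsymm j i]; omega) (by omega)
    omega
end

section
/- Let d₀, …, d_p be positive integers with L_j = lcm(d₀, …, d_j), let k₀ > k₁ > … > k_p be positive rationals with k_j having denominator d_j in lowest terms, let 0 ≤ t ≤ p, and let f be a rational with k_t > f ≥ k_{t+1} (interpreting k_{p+1} = 0 if t = p). Define A = k₀(1 − 1/d₀) + ∑_{j=1}^{p} k_j (1/L_{j-1} − 1/L_j) − 1 and C = k₀(1 − 1/d₀) + ∑_{j=1}^{t} k_j (1/L_{j-1} − 1/L_j) + f/L_t − 1. Then A ≤ C. -/
/-- Telescoping sum over `Icc (t+1) n`. -/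
lemma tele_aux (g : ℕ → ℚ) (t : ℕ) : ∀ n, t ≤ n →
    ∑ j ∈ Finset.Icc (t + 1) n, (g (j - 1) - g j) = g t - g n := by
  intro n
  induction n with
  | zero => intro h; interval_cases t; simp
  | succ n ih =>
    intro h
    rcases Nat.lt_or_ge t (n + 1) with h' | h'
    · have htn : t ≤ n := Nat.lt_succ_iff.mp h'
      rw [Finset.sum_Icc_succ_top (Nat.succ_le_succ htn), ih htn]
      rw [Nat.add_sub_cancel]
      ring
    · have : t = n + 1 := le_antisymm h h'
      subst this
      simp

/-- Loops versus adjacent edges: with `L j = lcm(d₀,…,d_j)`, strictly decreasing positive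
rationals `k₀ > ⋯ > k_p` with `k_j` of denominator `d_j`, `t ≤ p` and `f` a rational with
`k_t > f ≥ k_{t+1}` (interpreting `k_{p+1} = 0` when `t = p`), the rescaled loop
multiplicity `A` is at most the rescaled edge multiplicity `C`. -/
theorem stmt_14 (p : ℕ) (d : ℕ → ℕ) (hd : ∀ j ≤ p, 0 < d j)
    (L : ℕ → ℕ) (hL : ∀ j, L j = (Finset.range (j + 1)).lcm d)
    (k : ℕ → ℚ)
    (hkpos : ∀ j ≤ p, 0 < k j)
    (hkdec : ∀ i j, i < j → j ≤ p → k j < k i)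
    (hden : ∀ j ≤ p, (k j).den = d j)
    (t : ℕ) (ht : t ≤ p) (f : ℚ)
    (hft : f < k t)
    (hfk : t < p → k (t + 1) ≤ f) (hfp : t = p → 0 ≤ f) :
    k 0 * (1 - 1 / (d 0 : ℚ))
        + (∑ j ∈ Finset.Icc 1 p, k j * (1 / (L (j - 1) : ℚ) - 1 / (L j : ℚ))) - 1
      ≤ k 0 * (1 - 1 / (d 0 : ℚ))
        + (∑ j ∈ Finset.Icc 1 t, k j * (1 / (L (j - 1) : ℚ) - 1 / (L j : ℚ)))
        + f / (L t : ℚ) - 1 := by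
  -- positivity of L
  have hLpos : ∀ j ≤ p, 0 < L j := by
    intro j hj
    rw [hL j, Nat.pos_iff_ne_zero]
    intro h0
    rw [Finset.lcm_eq_zero_iff] at h0
    obtain ⟨i, hi, hi0⟩ := h0
    exact (hd i (le_trans (Nat.lt_succ_iff.mp (Finset.mem_range.mp hi)) hj)).ne hi0.symm
  -- divisibility / monotone
  have hdvd : ∀ j, L j ∣ L (j + 1) := by
    intro j
    rw [hL j, hL (j + 1)]
    exact Finset.lcm_mono (Finset.range_subset_range.mpr (Nat.le_succ _))
  have hLmono : ∀ j ≤ p, ∀ i, i ≤ j → L i ≤ L j := by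
    intro j hj i hij
    induction j with
    | zero => interval_cases i; exact le_refl _
    | succ n ih =>
      rcases Nat.lt_or_ge i (n + 1) with h' | h'
      · exact le_trans (ih (le_trans (Nat.le_succ n) hj) (Nat.lt_succ_iff.mp h'))
          (Nat.le_of_dvd (hLpos _ hj) (hdvd n))
      · have : i = n + 1 := le_antisymm hij h'
        subst this; exact le_refl _
  -- f nonneg
  have hf0 : 0 ≤ f := by
    rcases Nat.lt_or_ge t p with h' | h'
    · exact le_of_lt (lt_of_lt_of_le (hkpos (t + 1) h') (hfk h'))
    · exact hfp (le_antisymm ht h')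
  -- reduce
  have hsplit : Finset.Icc 1 p = Finset.Icc 1 t ∪ Finset.Icc (t + 1) p := by
    ext a
    simp only [Finset.mem_Icc, Finset.mem_union]
    omega
  have hdisj : Disjoint (Finset.Icc 1 t) (Finset.Icc (t + 1) p) := by
    apply Finset.disjoint_left.mpr
    intro a ha hb
    simp only [Finset.mem_Icc] at ha hb
    omega
  rw [hsplit, Finset.sum_union hdisj]
  have key : ∑ j ∈ Finset.Icc (t + 1) p, k j * (1 / (L (j - 1) : ℚ) - 1 / (L j : ℚ))
      ≤ f / (L t : ℚ) := by
    have step1 : ∑ j ∈ Finset.Icc (t + 1) p, k j * (1 / (L (j - 1) : ℚ) - 1 / (L j : ℚ))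
        ≤ ∑ j ∈ Finset.Icc (t + 1) p, (f / (L (j - 1) : ℚ) - f / (L j : ℚ)) := by
      apply Finset.sum_le_sum
      intro j hj
      simp only [Finset.mem_Icc] at hj
      have hjp : j ≤ p := hj.2
      have hj1 : t + 1 ≤ j := hj.1
      have htp : t < p := lt_of_lt_of_le hj1 hjp
      have hkf : k j ≤ f := by
        rcases Nat.lt_or_ge (t + 1) j with h' | h'
        · exact le_trans (le_of_lt (hkdec (t + 1) j h' hjp)) (hfk htp)
        · have : j = t + 1 := le_antisymm h' hj1
          subst this; exact hfk htp
      have hΔ : 0 ≤ 1 / (L (j - 1) : ℚ) - 1 / (L j : ℚ) := by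
        have h1 : (0 : ℚ) < (L (j - 1) : ℚ) := by
          exact_mod_cast hLpos (j - 1) (by omega)
        have h2 : (L (j - 1) : ℚ) ≤ (L j : ℚ) := by
          exact_mod_cast hLmono j hjp (j - 1) (by omega)
        have := one_div_le_one_div_of_le h1 h2
        linarith
      calc k j * (1 / (L (j - 1) : ℚ) - 1 / (L j : ℚ))
          ≤ f * (1 / (L (j - 1) : ℚ) - 1 / (L j : ℚ)) := mul_le_mul_of_nonneg_right hkf hΔ
        _ = f / (L (j - 1) : ℚ) - f / (L j : ℚ) := by ring
    have step2 : ∑ j ∈ Finset.Icc (t + 1) p, (f / (L (j - 1) : ℚ) - f / (L j : ℚ))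
        = f / (L t : ℚ) - f / (L p : ℚ) := tele_aux (fun j => f / (L j : ℚ)) t p ht
    have hLp : (0 : ℚ) < (L p : ℚ) := by exact_mod_cast hLpos p le_rfl
    have : 0 ≤ f / (L p : ℚ) := div_nonneg hf0 (le_of_lt hLp)
    linarith
  linarith
end
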